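/- The principal unifier property for rows: if the unification procedure on two concrete rows K₁ and K₂ succeeds with substitution θ, then θ unifies the signatures of all shared labels, and for any substitution θ' that unifies the restrictions of K₁ and K₂ to their common labels, there exists θ'' with θ' = θ'' ∘ θ; if unification fails, no unifier of the common-label restrictions exists. -/

import Mathlib

/-- Linearity types: constants `unl` (•) and `lin` (◦), or a linearity
variable φ. -/
inductive LinT
  | unl
  | lin
  | lvar (φ : ℕ)
deriving DecidableEq

/-- A substitution on linearity variables. -/
abbrev LSubst := ℕ → LinT

/-- Apply a substitution to a linearity type. -/
def applyL (θ : LSubst) : LinT → LinT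
  | LinT.unl => LinT.unl
  | LinT.lin => LinT.lin
  | LinT.lvar φ => θ φ

/-- The identity substitution. -/
def idS : LSubst := fun φ => LinT.lvar φ

/-- Composition of substitutions. -/
def compS (θ' θ : LSubst) : LSubst := fun φ => applyL θ' (θ φ)

/-- The singleton substitution `[Y/φ]`. -/
def updS (φ : ℕ) (Y : LinT) : LSubst := fun ψ => if ψ = φ then Y else LinT.lvar ψ

/-- Unification of two linearity types: identical linearities unify with the
identity, a variable unifies with anything via a singleton substitution, and
`•` with `◦` fails. -/
def ulin (Y Y' : LinT) : Option LSubst :=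
  if Y = Y' then some idS
  else
    match Y, Y' with
    | LinT.lvar φ, Y' => some (updS φ Y')
    | Y, LinT.lvar φ => some (updS φ Y)
    | _, _ => none

/-- A concrete row: a finite association of labels to linearity annotations
(standing for operation signatures `A ↠^Y B`). -/
abbrev CRow := List (String × LinT)

/-- Look up the annotation of a label in a row. -/
def lookupL (K : CRow) (l : String) : Option LinT :=
  (K.find? (fun e => e.1 == l)).map (·.2)

/-- Apply a substitution to a row. -/
def mapS (θ : LSubst) (K : CRow) : CRow :=
  K.map (fun e => (e.1, applyL θ e.2))

/-- The unification procedure on concrete rows: unify the annotations of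
shared labels label by label, composing the resulting substitutions. -/
def ulab : CRow → CRow → Option LSubst
  | [], _ => some idS
  | (l, Y) :: K₁, K₂ =>
    match lookupL K₂ l with
    | none => ulab K₁ K₂
    | some Y' =>
      match ulin Y Y' with
      | none => none
      | some θ =>
        match ulab (mapS θ K₁) (mapS θ K₂) with
        | none => none
        | some θ' => some (compS θ' θ)
termination_by K₁ _ => K₁.length
decreasing_by
  · simp
  · simp [mapS]

/-- `θ` unifies the restrictions of `K₁` and `K₂` to their common labels:
for every shared label, the two annotations become equal under `θ`. -/
def UnifiesCommon (θ : LSubst) (K₁ K₂ : CRow) : Prop :=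
  ∀ l Y₁ Y₂, lookupL K₁ l = some Y₁ → lookupL K₂ l = some Y₂ →
    applyL θ Y₁ = applyL θ Y₂

lemma applyL_comp (θ' θ : LSubst) (Y : LinT) :
    applyL (compS θ' θ) Y = applyL θ' (applyL θ Y) := by
  cases Y <;> rfl

lemma applyL_idS (Y : LinT) : applyL idS Y = Y := by cases Y <;> rfl

lemma updS_fix (φ : ℕ) (Y' : LinT) : applyL (updS φ Y') Y' = Y' := by
  cases Y' <;> simp [applyL, updS]

lemma updS_self (φ : ℕ) (Y' : LinT) : applyL (updS φ Y') (LinT.lvar φ) = Y' := by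
  simp [applyL, updS]

lemma upd_principal {φ : ℕ} {W : LinT} (θ' : LSubst)
    (hu : θ' φ = applyL θ' W) (Z : LinT) :
    applyL θ' Z = applyL θ' (applyL (updS φ W) Z) := by
  cases Z with
  | unl => rfl
  | lin => rfl
  | lvar ψ =>
    by_cases hψ : ψ = φ
    · subst hψ; simpa [applyL, updS] using hu
    · simp [applyL, updS, hψ]

lemma ulin_sound {Y Y' : LinT} {θ : LSubst} (h : ulin Y Y' = some θ) :
    applyL θ Y = applyL θ Y' := by
  unfold ulin at h
  split at h
  · next heq => subst heq; cases h; rfl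
  · next hne =>
    split at h
    · next φ => cases h; rw [updS_self, updS_fix]
    · next Y φ _ => cases h; rw [updS_self, updS_fix]
    · exact absurd h (by simp)

lemma ulin_none {Y Y' : LinT} (h : ulin Y Y' = none) (θ' : LSubst) :
    applyL θ' Y ≠ applyL θ' Y' := by
  unfold ulin at h
  split at h
  · simp at h
  · next hne =>
    split at h
    · simp at h
    · simp at h
    · next h1 h2 =>
      cases Y <;> cases Y' <;> simp_all [applyL]

lemma ulin_principal {Y Y' : LinT} {θ : LSubst} (h : ulin Y Y' = some θ)
    (θ' : LSubst) (hu : applyL θ' Y = applyL θ' Y') (Z : LinT) :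
    applyL θ' Z = applyL θ' (applyL θ Z) := by
  unfold ulin at h
  split at h
  · cases h; rw [applyL_idS]
  · next hne =>
    split at h
    · next φ => cases h; exact upd_principal θ' hu Z
    · next Ya φ h1 => cases h; exact upd_principal θ' hu.symm Z
    · exact absurd h (by simp)

lemma lookupL_cons (a : String × LinT) (K : CRow) (l : String) :
    lookupL (a :: K) l = if a.1 = l then some a.2 else lookupL K l := by
  simp only [lookupL, List.find?_cons]
  by_cases h : a.1 = l
  · simp [h]
  · rw [if_neg h]
    have : (a.1 == l) = false := by simpa using h
    rw [this]

lemma lookupL_mapS (θ : LSubst) (K : CRow) (l : String) :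
    lookupL (mapS θ K) l = (lookupL K l).map (applyL θ) := by
  induction K with
  | nil => rfl
  | cons a K ih =>
    simp only [mapS, List.map_cons]
    rw [lookupL_cons, lookupL_cons]
    by_cases h : a.1 = l
    · simp [h]
    · simp [h, ← ih, mapS]

lemma lookupL_eq_none {K : CRow} {l : String} (h : l ∉ K.map Prod.fst) :
    lookupL K l = none := by
  induction K with
  | nil => rfl
  | cons a K ih =>
    simp only [List.map_cons, List.mem_cons] at h
    push_neg at h
    rw [lookupL_cons, if_neg (fun he => h.1 he.symm)]
    exact ih h.2

lemma mem_of_lookupL {K : CRow} {l : String} {Y : LinT}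
    (h : lookupL K l = some Y) : l ∈ K.map Prod.fst := by
  by_contra hc
  rw [lookupL_eq_none hc] at h
  exact nomatch h


lemma UC_cons {l : String} {Y : LinT} {K K₂ : CRow} {θ' : LSubst}
    (hl : l ∉ K.map Prod.fst) :
    UnifiesCommon θ' ((l,Y)::K) K₂ ↔
      ((∀ Y₂, lookupL K₂ l = some Y₂ → applyL θ' Y = applyL θ' Y₂) ∧
       UnifiesCommon θ' K K₂) := by
  constructor
  · intro h
    refine ⟨fun Y₂ h2 => h l Y Y₂ ?_ h2, fun l' Y₁ Y₂ h1 h2 => ?_⟩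
    · rw [lookupL_cons]; simp
    · have hne : ¬ ((l,Y).1 = l') := by
        intro he
        rw [show l' = l from he.symm, lookupL_eq_none hl] at h1
        exact nomatch h1
      apply h l' Y₁ Y₂ ?_ h2
      rw [lookupL_cons, if_neg hne]
      exact h1
  · rintro ⟨hY, hUC⟩ l' Y₁ Y₂ h1 h2
    rw [lookupL_cons] at h1
    by_cases he : (l,Y).1 = l'
    · rw [if_pos he] at h1
      cases h1
      rw [show l' = l from he.symm] at h2
      exact hY Y₂ h2
    · rw [if_neg he] at h1
      exact hUC l' Y₁ Y₂ h1 h2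

lemma UC_mapS_of {θ₀ θ' : LSubst} {K K₂ : CRow}
    (hfac : ∀ Z, applyL θ' Z = applyL θ' (applyL θ₀ Z))
    (hUC : UnifiesCommon θ' K K₂) :
    UnifiesCommon θ' (mapS θ₀ K) (mapS θ₀ K₂) := by
  intro l Y₁ Y₂ h1 h2
  rw [lookupL_mapS] at h1 h2
  obtain ⟨W₁, hW₁, rfl⟩ := Option.map_eq_some_iff.mp h1
  obtain ⟨W₂, hW₂, rfl⟩ := Option.map_eq_some_iff.mp h2
  rw [← hfac, ← hfac]
  exact hUC l W₁ W₂ hW₁ hW₂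

lemma map_fst_mapS (θ : LSubst) (K : CRow) :
    (mapS θ K).map Prod.fst = K.map Prod.fst := by
  induction K with
  | nil => rfl
  | cons a K ih => simpa [mapS, List.map_cons] using ih

lemma ulab_aux : ∀ n (K₁ K₂ : CRow), K₁.length ≤ n → (K₁.map Prod.fst).Nodup →
    ((∀ θ, ulab K₁ K₂ = some θ → UnifiesCommon θ K₁ K₂ ∧
      ∀ θ', UnifiesCommon θ' K₁ K₂ → ∀ Z, applyL θ' Z = applyL θ' (applyL θ Z)) ∧
    (ulab K₁ K₂ = none → ¬ ∃ θ', UnifiesCommon θ' K₁ K₂)) := by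
  intro n
  induction n with
  | zero =>
    intro K₁ K₂ hlen _
    have hK : K₁ = [] := List.length_eq_zero_iff.mp (Nat.le_zero.mp hlen)
    subst hK
    constructor
    · intro θ hθ
      rw [ulab] at hθ
      cases hθ
      refine ⟨fun l Y₁ Y₂ h1 _ => ?_, fun θ' _ Z => by rw [applyL_idS]⟩
      simp [lookupL] at h1
    · intro h; rw [ulab] at h; exact nomatch h
  | succ n ih =>
    intro K₁ K₂ hlen hnd
    match K₁ with
    | [] =>
      constructor
      · intro θ hθ
        rw [ulab] at hθ
        cases hθ
        refine ⟨fun l Y₁ Y₂ h1 _ => ?_, fun θ' _ Z => by rw [applyL_idS]⟩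
        simp [lookupL] at h1
      · intro h; rw [ulab] at h; exact nomatch h
    | (l, Y) :: K =>
      simp only [List.length_cons, Nat.succ_le_succ_iff] at hlen
      simp only [List.map_cons, List.nodup_cons] at hnd
      obtain ⟨hl, hK⟩ := hnd
      cases hl2 : lookupL K₂ l with
      | none =>
        have heq : ulab ((l,Y)::K) K₂ = ulab K K₂ := by
          rw [ulab, hl2]
        rw [heq]
        obtain ⟨IH1, IH2⟩ := ih K K₂ hlen hK
        constructor
        · intro θ hθ
          obtain ⟨s1, s2⟩ := IH1 θ hθ
          refine ⟨(UC_cons hl).mpr ⟨fun Y₂ h2 => ?_, s1⟩,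
            fun θ' hθ' => s2 θ' ((UC_cons hl).mp hθ').2⟩
          rw [hl2] at h2; exact nomatch h2
        · rintro hn ⟨θ', hθ'⟩
          exact IH2 hn ⟨θ', ((UC_cons hl).mp hθ').2⟩
      | some Y' =>
        cases hul : ulin Y Y' with
        | none =>
          have heq : ulab ((l,Y)::K) K₂ = none := by
            rw [ulab, hl2]; dsimp only; rw [hul]
          rw [heq]
          constructor
          · intro θ hθ; exact nomatch hθ
          · rintro - ⟨θ', hθ'⟩
            exact ulin_none hul θ' (((UC_cons hl).mp hθ').1 Y' hl2)
        | some θ₀ =>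
          have hlen' : (mapS θ₀ K).length ≤ n := by
            simpa [mapS] using hlen
          have hnd' : ((mapS θ₀ K).map Prod.fst).Nodup := by
            rw [map_fst_mapS]; exact hK
          obtain ⟨IH1, IH2⟩ := ih (mapS θ₀ K) (mapS θ₀ K₂) hlen' hnd'
          cases hrec : ulab (mapS θ₀ K) (mapS θ₀ K₂) with
          | none =>
            have heq : ulab ((l,Y)::K) K₂ = none := by
              rw [ulab, hl2]; dsimp only; rw [hul]; dsimp only; rw [hrec]
            rw [heq]
            constructor
            · intro θ hθ; exact nomatch hθ
            · rintro - ⟨θ', hθ'⟩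
              obtain ⟨hY, hUC⟩ := (UC_cons hl).mp hθ'
              have hfac := ulin_principal hul θ' (hY Y' hl2)
              exact IH2 hrec ⟨θ', UC_mapS_of hfac hUC⟩
          | some θ₁ =>
            have heq : ulab ((l,Y)::K) K₂ = some (compS θ₁ θ₀) := by
              rw [ulab, hl2]; dsimp only; rw [hul]; dsimp only; rw [hrec]
            rw [heq]
            obtain ⟨s1, s2⟩ := IH1 θ₁ hrec
            constructor
            · intro θ hθ
              cases hθ
              constructor
              · apply (UC_cons hl).mpr
                constructor
                · intro Y₂ h2
                  rw [hl2] at h2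
                  cases h2
                  rw [applyL_comp, applyL_comp, ulin_sound hul]
                · intro l' Y₁ Y₂ h1 h2
                  rw [applyL_comp, applyL_comp]
                  exact s1 l' _ _
                    (by rw [lookupL_mapS, h1]; rfl)
                    (by rw [lookupL_mapS, h2]; rfl)
              · intro θ' hθ' Z
                obtain ⟨hY, hUC⟩ := (UC_cons hl).mp hθ'
                have hfac := ulin_principal hul θ' (hY Y' hl2)
                have h2 := s2 θ' (UC_mapS_of hfac hUC)
                rw [applyL_comp]
                calc applyL θ' Z = applyL θ' (applyL θ₀ Z) := hfac Z
                  _ = applyL θ' (applyL θ₁ (applyL θ₀ Z)) := h2 _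
            · intro h; exact nomatch h


/-- Principal unifier property for rows: if `ulab K₁ K₂` succeeds with `θ`,
then `θ` unifies the signatures of all shared labels, and any other unifier
`θ'` of the common-label restrictions factors through `θ` (i.e. `θ' = θ'' ∘ θ`
for some `θ''`); if `ulab K₁ K₂` fails, then no unifier of the common-label
restrictions exists. -/
theorem ulab_principal (K₁ K₂ : CRow)
    (h₁ : (K₁.map Prod.fst).Nodup) (h₂ : (K₂.map Prod.fst).Nodup) :
    (∀ θ, ulab K₁ K₂ = some θ →
      UnifiesCommon θ K₁ K₂ ∧
      ∀ θ', UnifiesCommon θ' K₁ K₂ →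
        ∃ θ'', ∀ Y, applyL θ' Y = applyL θ'' (applyL θ Y)) ∧
    (ulab K₁ K₂ = none → ¬ ∃ θ', UnifiesCommon θ' K₁ K₂) := by
  obtain ⟨A, B⟩ := ulab_aux K₁.length K₁ K₂ le_rfl h₁
  refine ⟨fun θ hθ => ?_, B⟩
  obtain ⟨s1, s2⟩ := A θ hθ
  exact ⟨s1, fun θ' hθ' => ⟨θ', s2 θ' hθ'⟩⟩
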